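/- arXiv:1305.5092 — 2 statements merged into one kernel-verified Lean document; each statement's English description precedes it below -/
import Mathlib

section
/- Let A be an arrangement of 9 distinct lines in the complex projective plane P^2(C) all of whose multiple points have multiplicity 2 or 3. If A admits a non-constant 3-cocycle η : A → F_3, then A is a (3,3)-net, i.e. A admits a partition into three classes of three lines each such that whenever two lines from different classes meet, their intersection point lies on exactly one line from each of the three classes. -/
open scoped Classical

noncomputable section

/-- The complex projective plane `P²(ℂ)`. -/
abbrev ProjPlane : Type := Projectivization ℂ (Fin 3 → ℂ)

/-- A subset of `P²(ℂ)` is a projective line if it is the zero locus of a nonzero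
linear form. -/
def IsProjLine (S : Set ProjPlane) : Prop :=
  ∃ f : (Fin 3 → ℂ) →ₗ[ℂ] ℂ, f ≠ 0 ∧ S = {p : ProjPlane | f p.rep = 0}

/-- The lines of the arrangement `A` passing through the point `p`. -/
def linesThrough (A : Finset (Set ProjPlane)) (p : ProjPlane) : Finset (Set ProjPlane) :=
  A.filter fun L => p ∈ L

/-- The multiplicity of a point `p` with respect to the arrangement `A`. -/
def mult (A : Finset (Set ProjPlane)) (p : ProjPlane) : ℕ :=
  (linesThrough A p).card

/-- `p` is a multiple point of the arrangement `A` (at least two lines pass through it). -/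
def IsMultPoint (A : Finset (Set ProjPlane)) (p : ProjPlane) : Prop :=
  2 ≤ mult A p

/-- A `q`-cocycle of the line arrangement `A`: for every multiple point `p`,
if `q` divides the multiplicity then the values of `η` on the lines through `p` sum to `0`,
and otherwise `η` is constant on the lines through `p`. -/
def IsCocycle (q : ℕ) (A : Finset (Set ProjPlane)) (η : Set ProjPlane → ZMod q) : Prop :=
  ∀ p : ProjPlane, IsMultPoint A p →
    ((q ∣ mult A p → ∑ L ∈ linesThrough A p, η L = 0) ∧
     (¬ q ∣ mult A p → ∀ L ∈ linesThrough A p, ∀ K ∈ linesThrough A p, η L = η K))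

/-- A function on lines is non-constant on the arrangement `A`. -/
def NonConstant {α : Type*} (A : Finset (Set ProjPlane)) (η : Set ProjPlane → α) : Prop :=
  ∃ L ∈ A, ∃ K ∈ A, η L ≠ η K

/-- A `(k,q)`-net structure on the line arrangement `A`, with classes `C 0, …, C (k-1)`:
the classes partition `A` into `k` classes of `q` lines each, and whenever two lines from
different classes meet, their intersection point lies on exactly one line of each class. -/
def IsNet (k q : ℕ) (A : Finset (Set ProjPlane)) (C : Fin k → Finset (Set ProjPlane)) : Prop :=
  (∀ L ∈ A, IsProjLine L) ∧
  A.card = k * q ∧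
  (∀ i, (C i).card = q) ∧
  (∀ i j, i ≠ j → Disjoint (C i) (C j)) ∧
  (∀ i, C i ⊆ A) ∧
  (∀ L ∈ A, ∃ i, L ∈ C i) ∧
  (∀ i j, i ≠ j → ∀ L ∈ C i, ∀ K ∈ C j, ∀ p : ProjPlane, p ∈ L → p ∈ K →
    ∀ m : Fin k, ∃! N, N ∈ C m ∧ p ∈ N)

/-- Lattice isomorphism of two line arrangements: a bijection between the lines such that
a subfamily of lines has a common point iff the image subfamily has a common point. -/
def LatticeIso (A B : Finset (Set ProjPlane)) : Prop :=
  ∃ φ : Set ProjPlane → Set ProjPlane, Set.BijOn φ ↑A ↑B ∧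
    ∀ S : Finset (Set ProjPlane), S ⊆ A →
      ((∃ p : ProjPlane, ∀ L ∈ S, p ∈ L) ↔ ∃ p : ProjPlane, ∀ L ∈ S, p ∈ φ L)

/-- The projective line with homogeneous equation `a·x + b·y + c·z = 0`. -/
def lineOf (a b c : ℂ) : Set ProjPlane :=
  {p : ProjPlane | a * p.rep 0 + b * p.rep 1 + c * p.rep 2 = 0}

lemma ker_finrank {f : (Fin 3 → ℂ) →ₗ[ℂ] ℂ} (hf : f ≠ 0) :
    Module.finrank ℂ (LinearMap.ker f) = 2 := by
  have hsurj : Function.Surjective f := by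
    obtain ⟨x, hx⟩ : ∃ x, f x ≠ 0 := by
      by_contra h
      push_neg at h
      exact hf (LinearMap.ext fun x => h x)
    intro c
    exact ⟨(c / f x) • x, by simp [div_mul_cancel₀, hx]⟩
  have h1 : Module.finrank ℂ (LinearMap.range f) = 1 := by
    rw [LinearMap.range_eq_top.2 hsurj]
    simp [Module.finrank_self]
  have h2 := LinearMap.finrank_range_add_finrank_ker f
  have h3 : Module.finrank ℂ (Fin 3 → ℂ) = 3 := by simp
  omega

lemma mem_line_iff {f : (Fin 3 → ℂ) →ₗ[ℂ] ℂ} (v : Fin 3 → ℂ) (hv : v ≠ 0) :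
    Projectivization.mk ℂ v hv ∈ {p : ProjPlane | f p.rep = 0} ↔ f v = 0 := by
  constructor
  · intro h
    obtain ⟨a, ha⟩ := (Projectivization.mk_eq_mk_iff ℂ _ _ (Projectivization.rep_nonzero _) hv).1
      (Projectivization.mk_rep _)
    simp only [Set.mem_setOf_eq] at h
    rw [← ha, Units.smul_def, map_smul, smul_eq_zero] at h
    rcases h with h | h
    · exact absurd h (Units.ne_zero a)
    · exact h
  · intro h
    obtain ⟨a, ha⟩ := (Projectivization.mk_eq_mk_iff ℂ _ _ (Projectivization.rep_nonzero _) hv).1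
      (Projectivization.mk_rep _)
    show f (Projectivization.mk ℂ v hv).rep = 0
    rw [← ha, Units.smul_def, map_smul, h, smul_zero]

lemma lines_meet {L K : Set ProjPlane} (hL : IsProjLine L) (hK : IsProjLine K) :
    ∃ p : ProjPlane, p ∈ L ∧ p ∈ K := by
  obtain ⟨f, hf, rfl⟩ := hL
  obtain ⟨g, hg, rfl⟩ := hK
  have hsum := Submodule.finrank_sup_add_finrank_inf_eq (LinearMap.ker f) (LinearMap.ker g)
  have hle : Module.finrank ℂ ↥(LinearMap.ker f ⊔ LinearMap.ker g) ≤ 3 := by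
    have := Submodule.finrank_le (LinearMap.ker f ⊔ LinearMap.ker g)
    simpa using this
  have hU := ker_finrank hf
  have hW := ker_finrank hg
  have hpos : 0 < Module.finrank ℂ ↥(LinearMap.ker f ⊓ LinearMap.ker g) := by omega
  obtain ⟨⟨v, hvmem⟩, hvne⟩ := Module.finrank_pos_iff_exists_ne_zero.1 hpos
  have hv : v ≠ 0 := fun h => hvne (Subtype.ext h)
  refine ⟨Projectivization.mk ℂ v hv, ?_, ?_⟩
  · exact (mem_line_iff v hv).2 (Submodule.mem_inf.1 hvmem).1
  · exact (mem_line_iff v hv).2 (Submodule.mem_inf.1 hvmem).2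

lemma line_unique {L K : Set ProjPlane} (hL : IsProjLine L) (hK : IsProjLine K)
    {p q : ProjPlane} (hpq : p ≠ q) (hpL : p ∈ L) (hpK : p ∈ K) (hqL : q ∈ L) (hqK : q ∈ K) :
    L = K := by
  obtain ⟨f, hf, rfl⟩ := hL
  obtain ⟨g, hg, rfl⟩ := hK
  have hind : LinearIndependent ℂ ![p.rep, q.rep] := by
    rw [linearIndependent_fin2]
    refine ⟨Projectivization.rep_nonzero _, fun a ha => ?_⟩
    apply hpq
    have ha0 : a ≠ 0 := by
      intro h; rw [h, zero_smul] at ha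
      exact Projectivization.rep_nonzero p ha.symm
    have := (Projectivization.mk_eq_mk_iff ℂ p.rep q.rep
      (Projectivization.rep_nonzero _) (Projectivization.rep_nonzero _)).2
      ⟨Units.mk0 a ha0, ha⟩
    rw [Projectivization.mk_rep, Projectivization.mk_rep] at this
    exact this
  have hspan : ∀ (h : (Fin 3 → ℂ) →ₗ[ℂ] ℂ), h ≠ 0 → h p.rep = 0 → h q.rep = 0 →
      LinearMap.ker h = Submodule.span ℂ (Set.range ![p.rep, q.rep]) := by
    intro h hh hp hq
    refine (Submodule.eq_of_le_of_finrank_le ?_ ?_).symm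
    · rw [Submodule.span_le]
      rintro x ⟨i, rfl⟩
      fin_cases i <;> simpa [LinearMap.mem_ker]
    · rw [finrank_span_eq_card hind, ker_finrank hh]
      simp
  have hker : LinearMap.ker f = LinearMap.ker g := by
    rw [hspan f hf hpL hqL, hspan g hg hpK hqK]
  ext x
  simp only [Set.mem_setOf_eq, ← LinearMap.mem_ker, hker]

lemma mem_linesThrough {A : Finset (Set ProjPlane)} {p : ProjPlane} {L : Set ProjPlane} :
    L ∈ linesThrough A p ↔ L ∈ A ∧ p ∈ L := Finset.mem_filter

lemma key {A : Finset (Set ProjPlane)}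
    (hmult : ∀ p : ProjPlane, IsMultPoint A p → mult A p = 2 ∨ mult A p = 3)
    {η : Set ProjPlane → ZMod 3} (hη : IsCocycle 3 A η)
    {L K : Set ProjPlane} (hL : L ∈ A) (hK : K ∈ A) (hne : η L ≠ η K)
    {p : ProjPlane} (hpL : p ∈ L) (hpK : p ∈ K) (c : ZMod 3) :
    ∃! N, N ∈ A ∧ p ∈ N ∧ η N = c := by
  have hLK : L ≠ K := fun h => hne (by rw [h])
  have hLth : L ∈ linesThrough A p := mem_linesThrough.2 ⟨hL, hpL⟩
  have hKth : K ∈ linesThrough A p := mem_linesThrough.2 ⟨hK, hpK⟩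
  have hmp : IsMultPoint A p := Finset.one_lt_card.2 ⟨L, hLth, K, hKth, hLK⟩
  rcases hmult p hmp with h2 | h3
  · exact absurd ((hη p hmp).2 (by rw [h2]; omega) L hLth K hKth) hne
  · have hsum := (hη p hmp).1 (by rw [h3])
    obtain ⟨a, b, d, hab, had, hbd, hset⟩ := Finset.card_eq_three.1 h3
    rw [hset, Finset.sum_insert (by simp [hab, had]), Finset.sum_insert (by simp [hbd]),
      Finset.sum_singleton] at hsum
    have hmem : ∀ x, x ∈ linesThrough A p ↔ x = a ∨ x = b ∨ x = d := by
      intro x; rw [hset]; simp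
    have hnc : ¬(η a = η b ∧ η a = η d) := by
      rintro ⟨h1, h2⟩
      have hval : ∀ x ∈ linesThrough A p, η x = η a := by
        intro x hx
        rcases (hmem x).1 hx with rfl | rfl | rfl
        · rfl
        · exact h1.symm
        · exact h2.symm
      exact hne ((hval L hLth).trans (hval K hKth).symm)
    have tri : ∀ x y z : ZMod 3, x + (y + z) = 0 → ¬(x = y ∧ x = z) →
        x ≠ y ∧ x ≠ z ∧ y ≠ z := by decide
    have cov : ∀ x y z c' : ZMod 3, x + (y + z) = 0 → ¬(x = y ∧ x = z) →
        c' = x ∨ c' = y ∨ c' = z := by decide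
    obtain ⟨d1, d2, d3⟩ := tri _ _ _ hsum hnc
    have ha' := (hmem a).2 (Or.inl rfl)
    have hb' := (hmem b).2 (Or.inr (Or.inl rfl))
    have hd' := (hmem d).2 (Or.inr (Or.inr rfl))
    have huniq : ∀ N, (N ∈ A ∧ p ∈ N ∧ η N = c) → ∀ N', (N' ∈ A ∧ p ∈ N' ∧ η N' = c) →
        N = N' := by
      rintro N ⟨hNA, hpN, hNc⟩ N' ⟨hN'A, hpN', hN'c⟩
      have hN := (hmem N).1 (mem_linesThrough.2 ⟨hNA, hpN⟩)
      have hN' := (hmem N').1 (mem_linesThrough.2 ⟨hN'A, hpN'⟩)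
      have hcc : η N = η N' := hNc.trans hN'c.symm
      rcases hN with rfl | rfl | rfl <;> rcases hN' with rfl | rfl | rfl <;>
        first | rfl | (exact absurd hcc (by assumption)) |
          (exact absurd hcc.symm (by assumption))
    rcases cov _ _ _ c hsum hnc with rfl | rfl | rfl
    · exact ⟨a, ⟨(mem_linesThrough.1 ha').1, (mem_linesThrough.1 ha').2, rfl⟩,
        fun N hN => huniq N hN a ⟨(mem_linesThrough.1 ha').1, (mem_linesThrough.1 ha').2, rfl⟩⟩
    · exact ⟨b, ⟨(mem_linesThrough.1 hb').1, (mem_linesThrough.1 hb').2, rfl⟩,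
        fun N hN => huniq N hN b ⟨(mem_linesThrough.1 hb').1, (mem_linesThrough.1 hb').2, rfl⟩⟩
    · exact ⟨d, ⟨(mem_linesThrough.1 hd').1, (mem_linesThrough.1 hd').2, rfl⟩,
        fun N hN => huniq N hN d ⟨(mem_linesThrough.1 hd').1, (mem_linesThrough.1 hd').2, rfl⟩⟩



lemma class_le {A : Finset (Set ProjPlane)} (hlines : ∀ L ∈ A, IsProjLine L)
    (hmult : ∀ p : ProjPlane, IsMultPoint A p → mult A p = 2 ∨ mult A p = 3)
    {η : Set ProjPlane → ZMod 3} (hη : IsCocycle 3 A η)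
    {a b c : ZMod 3} (hab : a ≠ b) (hac : a ≠ c) (hbc : b ≠ c)
    {L : Set ProjPlane} (hL : L ∈ A) (hLa : η L = a) :
    (A.filter fun K => η K = b).card ≤ (A.filter fun K => η K = c).card := by
  classical
  set φ : Set ProjPlane → Set ProjPlane := fun K =>
    if h : ∃ N, N ∈ A ∧ η N = c ∧ ∃ p, p ∈ L ∧ p ∈ K ∧ p ∈ N then h.choose else L with hφ
  have hspec : ∀ K ∈ A.filter fun K => η K = b,
      φ K ∈ A ∧ η (φ K) = c ∧ ∃ p, p ∈ L ∧ p ∈ K ∧ p ∈ φ K := by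
    intro K hK
    obtain ⟨hKA, hKb⟩ := Finset.mem_filter.1 hK
    have hne : η L ≠ η K := by rw [hLa, hKb]; exact hab
    obtain ⟨p, hpL, hpK⟩ := lines_meet (hlines L hL) (hlines K hKA)
    obtain ⟨N, ⟨hNA, hpN, hNc⟩, -⟩ := key hmult hη hL hKA hne hpL hpK c
    have h : ∃ N, N ∈ A ∧ η N = c ∧ ∃ p, p ∈ L ∧ p ∈ K ∧ p ∈ N :=
      ⟨N, hNA, hNc, p, hpL, hpK, hpN⟩
    rw [hφ]; simp only [dif_pos h]
    exact ⟨h.choose_spec.1, h.choose_spec.2.1, h.choose_spec.2.2⟩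
  apply Finset.card_le_card_of_injOn φ
  · intro K hK
    obtain ⟨h1, h2, -⟩ := hspec K hK
    exact Finset.mem_filter.2 ⟨h1, h2⟩
  · intro K hK K' hK' heq
    rw [Finset.mem_coe] at hK hK'
    obtain ⟨hNA, hNc, p, hpL, hpK, hpN⟩ := hspec K hK
    obtain ⟨hN'A, hN'c, p', hp'L, hp'K', hp'N⟩ := hspec K' hK'
    rw [heq] at hpN
    obtain ⟨hKA, hKb⟩ := Finset.mem_filter.1 hK
    obtain ⟨hK'A, hK'b⟩ := Finset.mem_filter.1 hK'
    have hLN' : L ≠ φ K' := by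
      intro h
      rw [← h] at hN'c; rw [hLa] at hN'c; exact hac hN'c.symm.symm
    have hpp' : p = p' := by
      by_contra hpp
      exact hLN' (line_unique (hlines L hL) (hlines _ (heq ▸ hNA))
        hpp hpL hpN hp'L hp'N)
    rw [← hpp'] at hp'K'
    have hne : η L ≠ η K := by rw [hLa, hKb]; exact hab
    obtain ⟨M, -, hu⟩ := key hmult hη hL hKA hne hpL hpK b
    have e1 := hu K ⟨hKA, hpK, hKb⟩
    have e2 := hu K' ⟨hK'A, hp'K', hK'b⟩
    rw [e1, e2]

/-- An arrangement of 9 lines with only double and triple points admitting a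
non-constant 3-cocycle is a (3,3)-net. -/
theorem statement0 (A : Finset (Set ProjPlane))
    (hlines : ∀ L ∈ A, IsProjLine L) (hcard : A.card = 9)
    (hmult : ∀ p : ProjPlane, IsMultPoint A p → mult A p = 2 ∨ mult A p = 3)
    (η : Set ProjPlane → ZMod 3) (hη : IsCocycle 3 A η) (hnc : NonConstant A η) :
    ∃ C : Fin 3 → Finset (Set ProjPlane), IsNet 3 3 A C := by
  classical
  obtain ⟨L0, hL0, K0, hK0, hnc0⟩ := hnc
  have hnone : ∀ c : ZMod 3, ∃ W ∈ A, η W = c := by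
    intro c
    obtain ⟨p, hpL, hpK⟩ := lines_meet (hlines L0 hL0) (hlines K0 hK0)
    obtain ⟨N, ⟨hNA, hpN, hNc⟩, -⟩ := key hmult hη hL0 hK0 hnc0 hpL hpK c
    exact ⟨N, hNA, hNc⟩
  set S : ZMod 3 → Finset (Set ProjPlane) := fun c => A.filter fun K => η K = c with hS
  obtain ⟨w0, hw0A, hw0⟩ := hnone 0
  obtain ⟨w1, hw1A, hw1⟩ := hnone 1
  have e12 : (S 1).card = (S 2).card :=
    le_antisymm (class_le hlines hmult hη (by decide) (by decide) (by decide) hw0A hw0)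
      (class_le hlines hmult hη (by decide) (by decide) (by decide) hw0A hw0)
  have e02 : (S 0).card = (S 2).card :=
    le_antisymm (class_le hlines hmult hη (by decide) (by decide) (by decide) hw1A hw1)
      (class_le hlines hmult hη (by decide) (by decide) (by decide) hw1A hw1)
  have huniv : (Finset.univ : Finset (ZMod 3)) = {0, 1, 2} := by decide
  have hsum : (S 0).card + ((S 1).card + (S 2).card) = 9 := by
    have h := Finset.card_eq_sum_card_fiberwise
      (fun (x : Set ProjPlane) (_ : x ∈ A) => Finset.mem_univ (η x))
    rw [hcard, huniv, Finset.sum_insert (by decide), Finset.sum_insert (by decide),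
      Finset.sum_singleton] at h
    exact h.symm
  have hS3 : ∀ c : ZMod 3, (S c).card = 3 := by
    have h0 : (S 0).card = 3 := by omega
    have h1 : (S 1).card = 3 := by omega
    have h2 : (S 2).card = 3 := by omega
    have hall : ∀ d : ZMod 3, d = 0 ∨ d = 1 ∨ d = 2 := by decide
    intro c
    rcases hall c with rfl | rfl | rfl <;> assumption
  have hval : ∀ c : ZMod 3, ((c.val : ℕ) : ZMod 3) = c := by decide
  have hvlt : ∀ c : ZMod 3, c.val < 3 := by decide
  set cl : Fin 3 → ZMod 3 := fun i => ((i : ℕ) : ZMod 3) with hcl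
  have hclinj : ∀ i j : Fin 3, i ≠ j → cl i ≠ cl j := by decide
  refine ⟨fun i => S (cl i), hlines, by rw [hcard], fun i => hS3 _, ?_, ?_, ?_, ?_⟩
  · intro i j hij
    rw [Finset.disjoint_left]
    intro L hLi hLj
    exact hclinj i j hij (((Finset.mem_filter.1 hLi).2.symm).trans (Finset.mem_filter.1 hLj).2)
  · intro i
    exact Finset.filter_subset _ _
  · intro L hL
    exact ⟨⟨(η L).val, hvlt _⟩, Finset.mem_filter.2 ⟨hL, (hval (η L)).symm⟩⟩
  · intro i j hij L hLi K hKj p hpL hpK m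
    obtain ⟨hLA, hLc⟩ := Finset.mem_filter.1 hLi
    obtain ⟨hKA, hKc⟩ := Finset.mem_filter.1 hKj
    have hne : η L ≠ η K := by rw [hLc, hKc]; exact hclinj i j hij
    obtain ⟨N, ⟨hNA, hpN, hNc⟩, hu⟩ := key hmult hη hLA hKA hne hpL hpK (cl m)
    refine ⟨N, ⟨Finset.mem_filter.2 ⟨hNA, hNc⟩, hpN⟩, ?_⟩
    rintro N' ⟨hN'm, hpN'⟩
    exact hu N' ⟨(Finset.mem_filter.1 hN'm).1, hpN', (Finset.mem_filter.1 hN'm).2⟩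
end
end

section
/- Any two (3,3)-nets in P^2(C) each of which has exactly 9 double points (equivalently, whose only triple points are the 9 mixed triple points) are lattice isomorphic; this common lattice is that of the Hesse arrangement, the union of three of the four singular fibers of the Hesse pencil a(x^3+y^3+z^3)+bxyz. -/
open scoped Classical

noncomputable section

/-- A primitive cube root of unity. -/
noncomputable def ω : ℂ := Complex.exp (2 * Real.pi * Complex.I / 3)

/-- The Hesse arrangement of nine lines: the union of three of the four singular fibers of
the Hesse pencil `a(x³+y³+z³) + b·xyz`, namely the three triangles
`∏ (x + ω^a y + ω^b z)` with `a + b ≡ t (mod 3)`, `t = 0, 1, 2`. -/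
noncomputable def Hesse9 : Finset (Set ProjPlane) :=
  Finset.image (fun ab : Fin 3 × Fin 3 => lineOf 1 (ω ^ (ab.1 : ℕ)) (ω ^ (ab.2 : ℕ)))
    Finset.univ

/-!
In a (3,3)-net every double point lies on two lines of one class, and two lines meet in a single
point, so there are at most nine double points, one for each pair of lines of one class. Exactly
nine double points therefore means that no third line passes through the meeting point of two
lines of one class. The only concurrences of three lines are then the nine mixed triple points,
which form a Latin square of order three, and every such square is isotopic to the addition
table of `ZMod 3`. So the lattice of the net is determined, and the Hesse arrangement, whose three
triangles meet in exactly this way, realizes it.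
-/

open Projectivization

lemma isPrimitiveRoot_ω : IsPrimitiveRoot ω 3 := by
  simpa [ω] using Complex.isPrimitiveRoot_exp 3 (by norm_num)

def omegaPow (x : ZMod 3) : ℂ := ω ^ x.val

lemma omegaPow_add (x y : ZMod 3) : omegaPow (x + y) = omegaPow x * omegaPow y := by
  rw [omegaPow, ZMod.val_add, ← pow_eq_pow_mod _ isPrimitiveRoot_ω.pow_eq_one, pow_add]
  rfl

lemma omegaPow_injective : Function.Injective omegaPow := fun x y h =>
  ZMod.val_injective 3 (isPrimitiveRoot_ω.pow_inj (ZMod.val_lt x) (ZMod.val_lt y) h)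

lemma norm_omegaPow (x : ZMod 3) : ‖omegaPow x‖ = 1 := by
  rw [omegaPow, norm_pow, isPrimitiveRoot_ω.norm'_eq_one (by norm_num), one_pow]

lemma two_mul_omegaPow_add_ne_zero (x y : ZMod 3) : 2 * omegaPow x + omegaPow y ≠ 0 := by
  intro h
  have := congrArg norm (eq_neg_of_add_eq_zero_left h)
  rw [norm_neg, norm_mul, norm_omegaPow, norm_omegaPow] at this
  norm_num at this

lemma omegaPow_add_add_eq_zero_iff (x y z : ZMod 3) :
    omegaPow x + omegaPow y + omegaPow z = 0 ↔ x ≠ y ∧ x ≠ z ∧ y ≠ z := by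
  refine ⟨fun h => ⟨?_, ?_, ?_⟩, fun ⟨hxy, hxz, hyz⟩ => ?_⟩
  · rintro rfl; exact two_mul_omegaPow_add_ne_zero x z (by linear_combination h)
  · rintro rfl; exact two_mul_omegaPow_add_ne_zero x y (by linear_combination h)
  · rintro rfl; exact two_mul_omegaPow_add_ne_zero y x (by linear_combination h)
  have huniv : ({x, y, z} : Finset (ZMod 3)) = Finset.univ := by
    revert x y z; decide
  calc omegaPow x + omegaPow y + omegaPow z = ∑ t ∈ {x, y, z}, omegaPow t := by
        rw [Finset.sum_insert (by simp [hxy, hxz]), Finset.sum_pair hyz, add_assoc]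
    _ = ∑ i ∈ Finset.range 3, ω ^ i := by
        rw [huniv]; exact Fin.sum_univ_eq_sum_range (ω ^ ·) 3
    _ = 0 := isPrimitiveRoot_ω.geom_sum_eq_zero (by norm_num)

lemma Projectivization.map_rep_mk_eq_zero_iff {K V W : Type*} [DivisionRing K] [AddCommGroup V]
    [Module K V] [AddCommGroup W] [Module K W] (f : V →ₗ[K] W) {v : V} (hv : v ≠ 0) :
    f (mk K v hv).rep = 0 ↔ f v = 0 := by
  obtain ⟨a, ha⟩ := exists_smul_eq_mk_rep K v hv
  rw [← ha, Units.smul_def, map_smul, smul_eq_zero, or_iff_right a.ne_zero]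

lemma finrank_ker_le_two {f : (Fin 3 → ℂ) →ₗ[ℂ] ℂ} (hf : f ≠ 0) :
    Module.finrank ℂ (LinearMap.ker f) ≤ 2 :=
  Nat.lt_succ_iff.mp (by simpa using Submodule.finrank_lt (mt LinearMap.ker_eq_top.mp hf))

lemma IsProjLine.exists_mem_inter {L K : Set ProjPlane} (hL : IsProjLine L) (hK : IsProjLine K) :
    ∃ p, p ∈ L ∧ p ∈ K := by
  obtain ⟨f, -, rfl⟩ := hL
  obtain ⟨g, -, rfl⟩ := hK
  have hker : LinearMap.ker (f.prod g) ≠ ⊥ := by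
    rw [Ne, LinearMap.ker_eq_bot]
    intro hinj
    simpa using LinearMap.finrank_le_finrank_of_injective hinj
  obtain ⟨v, hv, hv0⟩ := Submodule.exists_mem_ne_zero_of_ne_bot hker
  rw [LinearMap.mem_ker, LinearMap.prod_apply, Prod.mk_eq_zero] at hv
  exact ⟨mk ℂ v hv0, (map_rep_mk_eq_zero_iff f hv0).mpr hv.1,
    (map_rep_mk_eq_zero_iff g hv0).mpr hv.2⟩

/-- Two distinct points span a plane of `ℂ³`, which is then the kernel of both linear forms. -/
lemma IsProjLine.eq_of_mem_of_mem {L K : Set ProjPlane} (hL : IsProjLine L) (hK : IsProjLine K)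
    (hLK : L ≠ K) {p q : ProjPlane} (hpL : p ∈ L) (hpK : p ∈ K) (hqL : q ∈ L)
    (hqK : q ∈ K) : p = q := by
  obtain ⟨f, hf, rfl⟩ := hL
  obtain ⟨g, hg, rfl⟩ := hK
  by_contra hpq
  set P := Submodule.span ℂ (Set.range ![p.rep, q.rep])
  have hP : Module.finrank ℂ P = 2 := by
    rw [finrank_span_eq_card (linearIndependent_pair_iff_ne.mpr hpq), Fintype.card_fin]
  have ker_eq (h : (Fin 3 → ℂ) →ₗ[ℂ] ℂ) (hh : h ≠ 0) (hp : h p.rep = 0)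
      (hq : h q.rep = 0) : P = LinearMap.ker h := by
    refine Submodule.eq_of_le_of_finrank_le ?_ (hP ▸ finrank_ker_le_two hh)
    rw [Submodule.span_le, Set.range_subset_iff]
    intro i
    fin_cases i <;> simpa
  apply hLK
  ext x
  simp only [Set.mem_ofPred_eq, ← LinearMap.mem_ker, ← ker_eq f hf hpL hqL,
    ← ker_eq g hg hpK hqK]

lemma exists_mem_forall_of_card_le_two {S : Finset (Set ProjPlane)} (hS : ∀ L ∈ S, IsProjLine L)
    (h : S.card ≤ 2) : ∃ p, ∀ L ∈ S, p ∈ L := by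
  interval_cases hc : S.card
  · obtain rfl := Finset.card_eq_zero.mp hc
    exact ⟨mk ℂ ![1, 0, 0] (by simp), by simp⟩
  · obtain ⟨L, rfl⟩ := Finset.card_eq_one.mp hc
    obtain ⟨p, hp, -⟩ := (hS L (by simp)).exists_mem_inter (hS L (by simp))
    exact ⟨p, by simpa using hp⟩
  · obtain ⟨L, K, -, rfl⟩ := Finset.card_eq_two.mp hc
    obtain ⟨p, hpL, hpK⟩ := (hS L (by simp)).exists_mem_inter (hS K (by simp))
    exact ⟨p, by simp [hpL, hpK]⟩

def lineForm (a b c : ℂ) : (Fin 3 → ℂ) →ₗ[ℂ] ℂ :=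
  a • LinearMap.proj 0 + b • LinearMap.proj 1 + c • LinearMap.proj 2

lemma lineForm_apply (a b c : ℂ) (v : Fin 3 → ℂ) :
    lineForm a b c v = a * v 0 + b * v 1 + c * v 2 := rfl

lemma isProjLine_lineOf {a : ℂ} (ha : a ≠ 0) (b c : ℂ) : IsProjLine (lineOf a b c) := by
  refine ⟨lineForm a b c, fun h => ha ?_, rfl⟩
  simpa [lineForm_apply] using LinearMap.congr_fun h (Pi.single 0 1)

lemma mk_mem_lineOf_iff (a b c : ℂ) {v : Fin 3 → ℂ} (hv : v ≠ 0) :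
    mk ℂ v hv ∈ lineOf a b c ↔ a * v 0 + b * v 1 + c * v 2 = 0 :=
  map_rep_mk_eq_zero_iff (lineForm a b c) hv

/-- Two rows of a Latin square of order three that disagree in every column differ by a
constant shift. -/
lemma exists_bijective_add_of_latin_square_three (f : ZMod 3 → ZMod 3 → ZMod 3)
    (hrow : ∀ a, Function.Injective (f a)) (hcol : ∀ b, Function.Injective (f · b)) :
    ∃ σ τ : ZMod 3 → ZMod 3, Function.Bijective σ ∧ Function.Bijective τ ∧
      ∀ a b, f (σ a) (τ b) = a + b := by
  have shift : ∀ g h : ZMod 3 → ZMod 3, Function.Injective g → Function.Injective h →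
      (∀ b, g b ≠ h b) → ∃ s, ∀ b, h b = g b + s := by
    unfold Function.Injective; decide
  set s : ZMod 3 → ZMod 3 := fun a => f a 0 - f 0 0
  have hf : ∀ a b, f a b = f 0 b + s a := by
    intro a b
    by_cases ha : a = 0
    · simp [s, ha]
    obtain ⟨t, ht⟩ := shift (f 0) (f a) (hrow 0) (hrow a) fun b hb => ha (hcol b hb.symm)
    have hts : t = s a := by simp only [s, ht 0]; ring
    rw [ht b, hts]
  have hs : Function.Bijective s := Finite.injective_iff_bijective.mp fun a a' h =>
    hcol 0 (by simpa [s] using h)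
  let S := Equiv.ofBijective s hs
  let T := Equiv.ofBijective (f 0) (Finite.injective_iff_bijective.mp (hrow 0))
  refine ⟨S.symm, T.symm, S.symm.bijective, T.symm.bijective, fun a b => ?_⟩
  rw [hf, add_comm]
  exact congrArg₂ (· + ·) (S.apply_symm_apply a) (T.apply_symm_apply b)

/-- A labelling of the lines of `A` by a class `i : Fin 3` and an index `a : ZMod 3` that
realizes the intersection lattice of the Hesse arrangement. -/
structure HesseLabelling (A : Finset (Set ProjPlane)) where
  line : Fin 3 × ZMod 3 → Set ProjPlane
  bijOn : Set.BijOn line Set.univ A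
  isProjLine : ∀ x, IsProjLine (line x)
  eq_or_eq_of_mem : ∀ {p : ProjPlane} {i : Fin 3} {a a' : ZMod 3} (z : Fin 3 × ZMod 3),
    a ≠ a' → p ∈ line (i, a) → p ∈ line (i, a') → p ∈ line z →
      z = (i, a) ∨ z = (i, a')
  exists_mem : ∀ a b, ∃ p, p ∈ line (0, a) ∧ p ∈ line (1, b) ∧ p ∈ line (2, a + b)

namespace HesseLabelling

variable {A : Finset (Set ProjPlane)} (d : HesseLabelling A)

lemma injective : Function.Injective d.line :=
  Set.injOn_univ.mp d.bijOn.injOn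

lemma eq_of_mem_of_mem {x y : Fin 3 × ZMod 3} (hxy : x ≠ y) {p q : ProjPlane}
    (hpx : p ∈ d.line x) (hpy : p ∈ d.line y) (hqx : q ∈ d.line x) (hqy : q ∈ d.line y) :
    p = q :=
  (d.isProjLine x).eq_of_mem_of_mem (d.isProjLine y) (d.injective.ne hxy) hpx hpy hqx hqy

lemma eq_add_of_mem {p : ProjPlane} {a b c : ZMod 3} (h0 : p ∈ d.line (0, a))
    (h1 : p ∈ d.line (1, b)) (h2 : p ∈ d.line (2, c)) : c = a + b := by
  obtain ⟨q, hq0, hq1, hq2⟩ := d.exists_mem a b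
  obtain rfl : p = q := d.eq_of_mem_of_mem (by simp) h0 h1 hq0 hq1
  by_contra hc
  rcases d.eq_or_eq_of_mem (0, a) hc h2 hq2 h0 with h | h <;> simp at h

lemma injOn_fst_of_two_lt_card {T : Finset (Fin 3 × ZMod 3)} (hT : 2 < T.card) {p : ProjPlane}
    (hp : ∀ x ∈ T, p ∈ d.line x) : Set.InjOn Prod.fst (T : Set (Fin 3 × ZMod 3)) := by
  rintro ⟨i, a⟩ hx ⟨j, a'⟩ hy (rfl : i = j)
  by_contra hne
  have ha : a ≠ a' := fun h => hne (by rw [h])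
  obtain ⟨z, hz, hzx⟩ := Finset.exists_mem_notMem_of_card_lt_card
    (s := {(i, a), (i, a')}) (Finset.card_le_two.trans_lt hT)
  rw [Finset.mem_insert, Finset.mem_singleton] at hzx
  exact hzx (d.eq_or_eq_of_mem z ha (hp _ hx) (hp _ hy) (hp z hz))

lemma exists_mem_forall_iff (T : Finset (Fin 3 × ZMod 3)) :
    (∃ p, ∀ x ∈ T, p ∈ d.line x) ↔
      T.card ≤ 2 ∨ ∃ a b, T = {(0, a), (1, b), (2, a + b)} := by
  constructor
  · rintro ⟨p, hp⟩
    refine or_iff_not_imp_left.mpr fun hT => ?_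
    have hinj := d.injOn_fst_of_two_lt_card (not_le.mp hT) hp
    have hle : T.card ≤ Fintype.card (Fin 3) :=
      Finset.card_le_card_of_injOn (t := .univ) _ (by simp [Set.MapsTo]) hinj
    have hcard : T.card = 3 := le_antisymm (by simpa using hle) (not_le.mp hT)
    have himage : T.image Prod.fst = Finset.univ := Finset.eq_univ_of_card _
      (by rw [Finset.card_image_of_injOn hinj, hcard, Fintype.card_fin])
    have hclass (i : Fin 3) : ∃ a, (i, a) ∈ T := by
      obtain ⟨⟨j, a⟩, hx, rfl⟩ := Finset.mem_image.mp (himage ▸ Finset.mem_univ i)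
      exact ⟨a, hx⟩
    obtain ⟨a, ha⟩ := hclass 0
    obtain ⟨b, hb⟩ := hclass 1
    obtain ⟨c, hc⟩ := hclass 2
    obtain rfl := d.eq_add_of_mem (hp _ ha) (hp _ hb) (hp _ hc)
    refine ⟨a, b, (Finset.eq_of_subset_of_card_le ?_ ?_).symm⟩
    · simp [Finset.insert_subset_iff, ha, hb, hc]
    · rw [hcard, Finset.card_eq_three.mpr ⟨_, _, _, by simp, by simp, by simp, rfl⟩]
  · rintro (hT | ⟨a, b, rfl⟩)
    · obtain ⟨p, hp⟩ := exists_mem_forall_of_card_le_two (S := T.image d.line)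
        (by simp only [Finset.mem_image]; rintro _ ⟨x, -, rfl⟩; exact d.isProjLine x)
        (Finset.card_image_le.trans hT)
      exact ⟨p, fun x hx => hp _ (Finset.mem_image_of_mem _ hx)⟩
    · obtain ⟨p, h0, h1, h2⟩ := d.exists_mem a b
      exact ⟨p, by simp [h0, h1, h2]⟩

end HesseLabelling

lemma latticeIso_of_bijOn {ι : Type*} [Nonempty ι] {A B : Finset (Set ProjPlane)}
    {f g : ι → Set ProjPlane} (hf : Set.BijOn f Set.univ A) (hg : Set.BijOn g Set.univ B)
    (h : ∀ T : Finset ι, (∃ p, ∀ x ∈ T, p ∈ f x) ↔ ∃ p, ∀ x ∈ T, p ∈ g x) :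
    LatticeIso A B := by
  set f' := Function.invFunOn f Set.univ
  have hf' : Set.BijOn f' A Set.univ :=
    hf.invOn_invFunOn.symm.bijOn (Set.mapsTo_univ _ _) hf.mapsTo
  refine ⟨g ∘ f', hg.comp hf', fun S hS => ?_⟩
  have hS' : (∃ p, ∀ L ∈ S, p ∈ L) ↔ ∃ p, ∀ L ∈ S, p ∈ f (f' L) :=
    exists_congr fun p => forall₂_congr fun L hL => by rw [hf.invOn_invFunOn.2 (hS hL)]
  simpa [hS', Finset.forall_mem_image] using h (S.image f')

lemma HesseLabelling.latticeIso {A B : Finset (Set ProjPlane)} (dA : HesseLabelling A)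
    (dB : HesseLabelling B) : LatticeIso A B :=
  latticeIso_of_bijOn dA.bijOn dB.bijOn fun T => by
    rw [dA.exists_mem_forall_iff, dB.exists_mem_forall_iff]

/-- The third line through the intersection of `(0, a)` and `(1, b)` defines a Latin square;
relabelling the first two classes turns it into the addition table of `ZMod 3`. -/
lemma HesseLabelling.nonempty_of_exists_mem {A : Finset (Set ProjPlane)}
    (g : Fin 3 × ZMod 3 → Set ProjPlane) (hbij : Set.BijOn g Set.univ A)
    (hproj : ∀ x, IsProjLine (g x))
    (hsame : ∀ {p : ProjPlane} {i : Fin 3} {a a' : ZMod 3} (z : Fin 3 × ZMod 3), a ≠ a' →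
      p ∈ g (i, a) → p ∈ g (i, a') → p ∈ g z → z = (i, a) ∨ z = (i, a'))
    (hmeet : ∀ a b, ∃ c p, p ∈ g (0, a) ∧ p ∈ g (1, b) ∧ p ∈ g (2, c)) :
    Nonempty (HesseLabelling A) := by
  choose f P hP using hmeet
  have hinj : Function.Injective g := Set.injOn_univ.mp hbij.injOn
  have meet_unique {x y : Fin 3 × ZMod 3} (hxy : x ≠ y) {p q : ProjPlane} (hpx : p ∈ g x)
      (hpy : p ∈ g y) (hqx : q ∈ g x) (hqy : q ∈ g y) : p = q :=
    (hproj x).eq_of_mem_of_mem (hproj y) (hinj.ne hxy) hpx hpy hqx hqy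
  have hrow (a : ZMod 3) : Function.Injective (f a) := by
    intro b b' h
    by_contra hb
    have hPP := meet_unique (by simp) (hP a b).1 (hP a b).2.2 (hP a b').1 (h ▸ (hP a b').2.2)
    rcases hsame (0, a) hb (hP a b).2.1 (hPP ▸ (hP a b').2.1) (hP a b).1 with h | h <;> simp at h
  have hcol (b : ZMod 3) : Function.Injective (f · b) := by
    intro a a' (h : f a b = f a' b)
    by_contra ha
    have hPP := meet_unique (by simp) (hP a b).2.1 (hP a b).2.2 (hP a' b).2.1
      (h ▸ (hP a' b).2.2)
    rcases hsame (1, b) ha (hP a b).1 (hPP ▸ (hP a' b).1) (hP a b).2.1 with h | h <;> simp at h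
  obtain ⟨σ, τ, hσ, hτ, hστ⟩ := exists_bijective_add_of_latin_square_three f hrow hcol
  have hρ : ∀ i, Function.Bijective (![σ, τ, id] i) := by
    intro i
    fin_cases i
    exacts [hσ, hτ, Function.bijective_id]
  let π := Equiv.prodShear (Equiv.refl (Fin 3)) fun i => Equiv.ofBijective _ (hρ i)
  refine ⟨⟨g ∘ π, hbij.comp (Set.bijOn_univ.mpr π.bijective), fun x => hproj (π x), ?_,
    ?_⟩⟩
  · intro p i a a' z ha h h' hz
    rcases hsame (π z) ((hρ i).injective.ne ha) h h' hz with h | h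
    exacts [.inl (π.injective h), .inr (π.injective h)]
  · intro a b
    exact ⟨P (σ a) (τ b), (hP _ _).1, (hP _ _).2.1, hστ a b ▸ (hP _ _).2.2⟩

lemma injOn_linesThrough {A : Finset (Set ProjPlane)} (hA : ∀ L ∈ A, IsProjLine L) :
    Set.InjOn (linesThrough A) {p | IsMultPoint A p} := by
  intro p hp q _ hpq
  obtain ⟨L, hL, K, hK, hLK⟩ := Finset.one_lt_card.mp hp
  have hLq : L ∈ linesThrough A q := hpq ▸ hL
  have hKq : K ∈ linesThrough A q := hpq ▸ hK
  simp only [linesThrough, Finset.mem_filter] at hL hK hLq hKq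
  exact (hA L hL.1).eq_of_mem_of_mem (hA K hK.1) hLK hL.2 hK.2 hLq.2 hKq.2

namespace IsNet

variable {k q : ℕ} {A : Finset (Set ProjPlane)} {C : Fin k → Finset (Set ProjPlane)}

lemma isProjLine_of_mem_class (hA : IsNet k q A C) {i : Fin k} {L : Set ProjPlane}
    (hL : L ∈ C i) : IsProjLine L :=
  hA.1 L (hA.2.2.2.2.1 i hL)

lemma class_eq (hA : IsNet k q A C) {i j : Fin k} {L : Set ProjPlane} (hi : L ∈ C i)
    (hj : L ∈ C j) : i = j := by
  by_contra hij
  exact Finset.disjoint_left.mp (hA.2.2.2.1 i j hij) hi hj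

/-- Two lines of different classes through a point force a line of a third class through it. -/
lemma linesThrough_mem_pairs (hA : IsNet k q A C) (hk : 3 ≤ k) {p : ProjPlane}
    (hp : mult A p = 2) :
    linesThrough A p ∈ Finset.univ.biUnion fun i => (C i).powersetCard 2 := by
  have ⟨_, _, _, _, hsub, hcover, hmixed⟩ := hA
  obtain ⟨L, K, hLK, hpLK⟩ := Finset.card_eq_two.mp hp
  have hL : L ∈ A ∧ p ∈ L := Finset.mem_filter.mp (show L ∈ linesThrough A p by simp [hpLK])
  have hK : K ∈ A ∧ p ∈ K := Finset.mem_filter.mp (show K ∈ linesThrough A p by simp [hpLK])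
  obtain ⟨i, hLi⟩ := hcover L hL.1
  obtain ⟨j, hKj⟩ := hcover K hK.1
  suffices i = j by
    subst this
    exact Finset.mem_biUnion.mpr ⟨i, Finset.mem_univ _, Finset.mem_powersetCard.mpr
      ⟨by simp [hpLK, Finset.insert_subset_iff, hLi, hKj], hpLK ▸ Finset.card_pair hLK⟩⟩
  by_contra hij
  obtain ⟨m, hm⟩ : ((Finset.univ.erase i).erase j).Nonempty := by
    rw [← Finset.card_pos, Finset.card_erase_of_mem (by simp [Ne.symm hij]),
      Finset.card_erase_of_mem (Finset.mem_univ i), Finset.card_univ, Fintype.card_fin]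
    omega
  obtain ⟨hmj, hmi, -⟩ := by simpa only [Finset.mem_erase] using hm
  obtain ⟨N, ⟨hNm, hpN⟩, -⟩ := hmixed i j hij L hLi K hKj p hL.2 hK.2 m
  have hN : N ∈ linesThrough A p := Finset.mem_filter.mpr ⟨hsub m hNm, hpN⟩
  rw [hpLK, Finset.mem_insert, Finset.mem_singleton] at hN
  rcases hN with rfl | rfl
  exacts [hmi (hA.class_eq hNm hLi), hmj (hA.class_eq hNm hKj)]

/-- Double points inject into the `k * q.choose 2` pairs of lines of one class, so attaining this
count makes the injection onto. -/
lemma linesThrough_eq_pair (hA : IsNet k q A C) (hk : 3 ≤ k)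
    (hD : {p | mult A p = 2}.ncard = k * q.choose 2) {i : Fin k} {L L' : Set ProjPlane}
    (hL : L ∈ C i) (hL' : L' ∈ C i) (hLL' : L ≠ L') {p : ProjPlane} (hpL : p ∈ L)
    (hpL' : p ∈ L') : linesThrough A p = {L, L'} := by
  set pairs := Finset.univ.biUnion fun i => (C i).powersetCard 2
  have hpairs : pairs.card ≤ k * q.choose 2 := by
    refine Finset.card_biUnion_le.trans ?_
    simp [Finset.card_powersetCard, hA.2.2.1]
  have himage : linesThrough A '' {p | mult A p = 2} = pairs := by
    refine Set.eq_of_subset_of_ncard_le ?_ ?_ pairs.finite_toSet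
    · rintro _ ⟨p, hp, rfl⟩
      exact hA.linesThrough_mem_pairs hk hp
    · rw [Set.ncard_coe_finset, Set.InjOn.ncard_image, hD]
      · exact hpairs
      · exact (injOn_linesThrough fun L hL => hA.1 L hL).mono fun p hp => hp.ge
  have hmem : {L, L'} ∈ pairs := Finset.mem_biUnion.mpr ⟨i, Finset.mem_univ _,
    Finset.mem_powersetCard.mpr ⟨by simp [Finset.insert_subset_iff, hL, hL'],
      Finset.card_pair hLL'⟩⟩
  obtain ⟨r, hr, hrLL'⟩ := himage.symm ▸ Finset.mem_coe.mpr hmem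
  have hrL : r ∈ L := (Finset.mem_filter.mp (show L ∈ linesThrough A r by simp [hrLL'])).2
  have hrL' : r ∈ L' := (Finset.mem_filter.mp (show L' ∈ linesThrough A r by simp [hrLL'])).2
  rwa [← (hA.isProjLine_of_mem_class hL).eq_of_mem_of_mem (hA.isProjLine_of_mem_class hL') hLL'
    hrL hrL' hpL hpL']

end IsNet

lemma IsNet.nonempty_hesseLabelling {A : Finset (Set ProjPlane)}
    {C : Fin 3 → Finset (Set ProjPlane)}
    (hA : IsNet 3 3 A C) (hD : {p | mult A p = 2}.ncard = 9) : Nonempty (HesseLabelling A) := by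
  have ⟨_, _, hcard, _, hsub, hcover, hmixed⟩ := hA
  have enum (i : Fin 3) : ↥(C i) ≃ ZMod 3 :=
    Fintype.equivOfCardEq (by rw [Fintype.card_coe, hcard i, ZMod.card])
  set g : Fin 3 × ZMod 3 → Set ProjPlane := fun x => (enum x.1).symm x.2
  have hgC (x : Fin 3 × ZMod 3) : g x ∈ C x.1 := ((enum x.1).symm x.2).2
  have hg_surj {i : Fin 3} {L : Set ProjPlane} (hL : L ∈ C i) :
      L = g (i, enum i ⟨L, hL⟩) := by
    simp [g]
  have hinj : Function.Injective g := by
    rintro ⟨i, a⟩ ⟨j, b⟩ h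
    obtain rfl : i = j := hA.class_eq (hgC (i, a)) (h ▸ hgC (j, b))
    simpa [g, Subtype.ext_iff] using h
  have hbij : Set.BijOn g Set.univ A := by
    refine ⟨fun x _ => hsub _ (hgC x), hinj.injOn, fun L hL => ?_⟩
    obtain ⟨i, hLi⟩ := hcover L hL
    exact ⟨_, Set.mem_univ _, (hg_surj hLi).symm⟩
  refine HesseLabelling.nonempty_of_exists_mem g hbij
    (fun x => hA.isProjLine_of_mem_class (hgC x)) ?_ ?_
  · intro p i a a' z ha hpa hpa' hpz
    have hpair := hA.linesThrough_eq_pair (by norm_num) (by rw [hD]; rfl) (hgC (i, a)) (hgC (i, a'))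
      (hinj.ne (by simpa using ha)) hpa hpa'
    have hz : g z ∈ linesThrough A p :=
      Finset.mem_filter.mpr ⟨hsub _ (hgC z), hpz⟩
    rw [hpair, Finset.mem_insert, Finset.mem_singleton, hinj.eq_iff, hinj.eq_iff] at hz
    exact hz
  · intro a b
    obtain ⟨p, hp0, hp1⟩ := (hA.isProjLine_of_mem_class (hgC (0, a))).exists_mem_inter
      (hA.isProjLine_of_mem_class (hgC (1, b)))
    obtain ⟨N, ⟨hN, hpN⟩, -⟩ := hmixed 0 1 (by decide) _ (hgC (0, a)) _ (hgC (1, b)) p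
      hp0 hp1 2
    exact ⟨_, p, hp0, hp1, hg_surj hN ▸ hpN⟩

def hesseLine (u v : ZMod 3) : Set ProjPlane := lineOf 1 (omegaPow u) (omegaPow v)

lemma hesse9_eq_image : Hesse9 = Finset.univ.image fun x : ZMod 3 × ZMod 3 => hesseLine x.1 x.2 :=
  rfl

lemma mk_mem_hesseLine_iff (u v : ZMod 3) {w : Fin 3 → ℂ} (hw : w ≠ 0) :
    mk ℂ w hw ∈ hesseLine u v ↔ w 0 + omegaPow u * w 1 + omegaPow v * w 2 = 0 := by
  rw [hesseLine, mk_mem_lineOf_iff, one_mul]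

lemma mk_mem_hesseLine_iff_fst_eq (k u v : ZMod 3) :
    mk ℂ ![-omegaPow k, 1, 0] (by simp) ∈ hesseLine u v ↔ u = k := by
  simp [mk_mem_hesseLine_iff, neg_add_eq_zero, eq_comm, omegaPow_injective.eq_iff]

lemma mk_mem_hesseLine_iff_snd_eq (k u v : ZMod 3) :
    mk ℂ ![-omegaPow k, 0, 1] (by simp) ∈ hesseLine u v ↔ v = k := by
  simp [mk_mem_hesseLine_iff, neg_add_eq_zero, eq_comm, omegaPow_injective.eq_iff]

lemma mk_mem_hesseLine_iff_fst_sub_snd_eq (k u v : ZMod 3) :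
    mk ℂ ![0, 1, -omegaPow k] (by simp) ∈ hesseLine u v ↔ u - v = k := by
  simp [mk_mem_hesseLine_iff, ← sub_eq_add_neg, ← omegaPow_add,
    omegaPow_injective.eq_iff, sub_eq_iff_eq_add']

lemma mk_mem_hesseLine_iff_ne (α β u v : ZMod 3) :
    mk ℂ ![omegaPow α, omegaPow β, 1] (by simp) ∈ hesseLine u v ↔
      α ≠ u + β ∧ α ≠ v ∧ u + β ≠ v := by
  simp [mk_mem_hesseLine_iff, ← omegaPow_add, omegaPow_add_add_eq_zero_iff]

lemma hesseLine_injective :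
    Function.Injective fun x : ZMod 3 × ZMod 3 => hesseLine x.1 x.2 := by
  rintro ⟨u, v⟩ ⟨u', v'⟩ (h : hesseLine u v = hesseLine u' v')
  have hu := mk_mem_hesseLine_iff_fst_eq u u' v'
  have hv := mk_mem_hesseLine_iff_snd_eq v u' v'
  rw [← h, mk_mem_hesseLine_iff_fst_eq] at hu
  rw [← h, mk_mem_hesseLine_iff_snd_eq] at hv
  rw [(hu.mp rfl).symm, (hv.mp rfl).symm]

/-- The lines `u + v = s` form a triangle; two of its sides meet at the vertex
`[ω^(s+u+u') : ω^(s-u-u') : 1]`, which lies on no other line of the arrangement. -/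
lemma eq_or_eq_of_mem_hesseLine {s u u' U V : ZMod 3} (hu : u ≠ u') {p : ProjPlane}
    (hp : p ∈ hesseLine u (s - u)) (hp' : p ∈ hesseLine u' (s - u'))
    (hpUV : p ∈ hesseLine U V) : (U, V) = (u, s - u) ∨ (U, V) = (u', s - u') := by
  have on_vertex : ∀ s u u' t : ZMod 3, u ≠ u' → (t = u ∨ t = u') →
      s + u + u' ≠ t + (s - u - u') ∧ s + u + u' ≠ s - t ∧ t + (s - u - u') ≠ s - t := by
    decide
  have only_vertex : ∀ s u u' U V : ZMod 3, u ≠ u' →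
      (s + u + u' ≠ U + (s - u - u') ∧ s + u + u' ≠ V ∧ U + (s - u - u') ≠ V) →
      (U, V) = (u, s - u) ∨ (U, V) = (u', s - u') := by
    decide
  have hne : hesseLine u (s - u) ≠ hesseLine u' (s - u') :=
    hesseLine_injective.ne (a₁ := (u, s - u)) (a₂ := (u', s - u')) (by simp [hu])
  have hw : mk ℂ ![omegaPow (s + u + u'), omegaPow (s - u - u'), 1] (by simp) = p :=
    (isProjLine_lineOf one_ne_zero _ _).eq_of_mem_of_mem (isProjLine_lineOf one_ne_zero _ _) hne
      ((mk_mem_hesseLine_iff_ne ..).mpr (on_vertex s u u' u hu (.inl rfl)))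
      ((mk_mem_hesseLine_iff_ne ..).mpr (on_vertex s u u' u' hu (.inr rfl))) hp hp'
  rw [← hw, mk_mem_hesseLine_iff_ne] at hpUV
  exact only_vertex s u u' U V hu hpUV

/-- The line of class `i` with index `a` is `hesseLine a (i - a)`. -/
def hesseIndex (x : Fin 3 × ZMod 3) : ZMod 3 × ZMod 3 := (x.2, ((x.1 : ℕ) : ZMod 3) - x.2)

lemma hesseIndex_bijective : Function.Bijective hesseIndex := by
  unfold Function.Bijective Function.Injective Function.Surjective hesseIndex
  decide

lemma nonempty_hesseLabelling_hesse9 : Nonempty (HesseLabelling Hesse9) := by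
  set H : ZMod 3 × ZMod 3 → Set ProjPlane := fun x => hesseLine x.1 x.2
  have hbij : Set.BijOn H Set.univ Hesse9 := by
    rw [hesse9_eq_image, Finset.coe_image, Finset.coe_univ]
    exact hesseLine_injective.injOn.bijOn_image
  refine HesseLabelling.nonempty_of_exists_mem (H ∘ hesseIndex)
    (hbij.comp (Set.bijOn_univ.mpr hesseIndex_bijective))
    (fun _ => isProjLine_lineOf one_ne_zero _ _) ?_ ?_
  · intro p i a a' z ha hpa hpa' hpz
    rcases eq_or_eq_of_mem_hesseLine ha hpa hpa' hpz with h | h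
    exacts [.inl (hesseIndex_bijective.injective h), .inr (hesseIndex_bijective.injective h)]
  · -- `(0, a)` and `(1, b)` meet at one of the nine flexes, the points with a zero coordinate.
    intro a b
    simp only [Function.comp, H, hesseIndex, Fin.val_zero, Fin.val_one, Fin.val_two]
    push_cast
    obtain ⟨d, rfl⟩ : ∃ d, b = a + d := ⟨b - a, by ring⟩
    rcases (by decide : ∀ d : ZMod 3, d = 0 ∨ d = 1 ∨ d = 2) d with rfl | rfl | rfl
    · refine ⟨a, _, (mk_mem_hesseLine_iff_fst_eq a ..).mpr ?_,
        (mk_mem_hesseLine_iff_fst_eq ..).mpr ?_, (mk_mem_hesseLine_iff_fst_eq ..).mpr ?_⟩ <;>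
        revert a <;> decide
    · refine ⟨a + 2, _, (mk_mem_hesseLine_iff_snd_eq (-a) ..).mpr ?_,
        (mk_mem_hesseLine_iff_snd_eq ..).mpr ?_, (mk_mem_hesseLine_iff_snd_eq ..).mpr ?_⟩ <;>
        revert a <;> decide
    · refine ⟨a + 1, _, (mk_mem_hesseLine_iff_fst_sub_snd_eq (2 * a) ..).mpr ?_,
        (mk_mem_hesseLine_iff_fst_sub_snd_eq ..).mpr ?_,
        (mk_mem_hesseLine_iff_fst_sub_snd_eq ..).mpr ?_⟩ <;> revert a <;> decide

/-- Any two (3,3)-nets with exactly 9 double points are lattice isomorphic,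
and their common lattice is that of the Hesse arrangement. -/
theorem statement2 (A B : Finset (Set ProjPlane))
    (CA CB : Fin 3 → Finset (Set ProjPlane))
    (hA : IsNet 3 3 A CA) (hB : IsNet 3 3 B CB)
    (hAd : {p : ProjPlane | mult A p = 2}.ncard = 9)
    (hBd : {p : ProjPlane | mult B p = 2}.ncard = 9) :
    LatticeIso A B ∧ LatticeIso A Hesse9 := by
  obtain ⟨dA⟩ := hA.nonempty_hesseLabelling hAd
  obtain ⟨dB⟩ := hB.nonempty_hesseLabelling hBd
  obtain ⟨dH⟩ := nonempty_hesseLabelling_hesse9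
  exact ⟨dA.latticeIso dB, dA.latticeIso dH⟩
end
end
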